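/- arXiv:1105.0471 — 8 statements merged into one kernel-verified Lean document; each statement's English description precedes it below -/
import Mathlib

section
/- Let (O, M, I) be a partition of {1,…,n} and assume the bordered matrix M̄ = [[0, y_Mᵀ],[y_M, Q_{M,M}]] is invertible. Let c, d ∈ ℝⁿ and let S ⊆ ℝ. Suppose for each θ ∈ S there are α₀(θ) ∈ ℝ and α(θ) ∈ ℝⁿ satisfying: α(θ)_i = 0 for all i ∈ O; α(θ)_i = c_i + θ d_i for all i ∈ I; (Q α(θ) + α₀(θ) y)_i = 1 for all i ∈ M; and yᵀ α(θ) = 0. Define β₀ ∈ ℝ and β ∈ ℝⁿ by [β₀; β_M] = −M̄⁻¹ [y_Iᵀ; Q_{M,I}] d_I, β_i = 0 for i ∈ O, and β_i = d_i for i ∈ I. Then for all θ and θ + Δθ in S, α(θ + Δθ) = α(θ) + Δθ·β and α₀(θ + Δθ) = α₀(θ) + Δθ·β₀. -/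
open Matrix BigOperators

/-- The bordered matrix `M̄ = [[0, y_Mᵀ],[y_M, Q_{M,M}]]`. -/
noncomputable def bordered {n : ℕ} (Q : Matrix (Fin n) (Fin n) ℝ) (y : Fin n → ℝ)
    (M : Finset (Fin n)) : Matrix (Unit ⊕ ↥M) (Unit ⊕ ↥M) ℝ :=
  Matrix.fromBlocks 0 (Matrix.of fun _ (j : ↥M) => y j.1)
    (Matrix.of fun (i : ↥M) _ => y i.1)
    (Q.submatrix (fun i : ↥M => i.1) (fun j : ↥M => j.1))

/-- The vector `[y_Iᵀ d_I ; Q_{M,I} d_I] ∈ ℝ^{1+|M|}`. -/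
noncomputable def rhsIVec {n : ℕ} (Q : Matrix (Fin n) (Fin n) ℝ) (y : Fin n → ℝ)
    (M I : Finset (Fin n)) (d : Fin n → ℝ) : (Unit ⊕ ↥M) → ℝ :=
  Sum.elim (fun _ => ∑ i ∈ I, y i * d i) (fun m : ↥M => ∑ i ∈ I, Q m.1 i * d i)

/-- As long as the partition `(O, M, I)` is unchanged, the suboptimal solution path is
linear in `θ` with direction `(β₀, β)` given by the bordered linear system. -/
theorem suboptimal_path_piecewise_linear
    (n : ℕ) (hn : 0 < n)
    (Q : Matrix (Fin n) (Fin n) ℝ) (hQ : Q.IsSymm)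
    (y c d : Fin n → ℝ)
    (O M I : Finset (Fin n))
    (hOM : Disjoint O M) (hOI : Disjoint O I) (hMI : Disjoint M I)
    (hcover : O ∪ M ∪ I = Finset.univ)
    (hInv : IsUnit (bordered Q y M))
    (S : Set ℝ) (α : ℝ → Fin n → ℝ) (α₀ : ℝ → ℝ)
    (hO : ∀ θ ∈ S, ∀ i ∈ O, α θ i = 0)
    (hI : ∀ θ ∈ S, ∀ i ∈ I, α θ i = c i + θ * d i)
    (hM : ∀ θ ∈ S, ∀ i ∈ M, (Q *ᵥ α θ + α₀ θ • y) i = 1)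
    (heq : ∀ θ ∈ S, y ⬝ᵥ α θ = 0)
    (β₀ : ℝ) (β : Fin n → ℝ)
    (hβtop : Sum.elim (fun _ : Unit => β₀) (fun m : ↥M => β m.1)
        = -((bordered Q y M)⁻¹ *ᵥ rhsIVec Q y M I d))
    (hβO : ∀ i ∈ O, β i = 0)
    (hβI : ∀ i ∈ I, β i = d i) :
    ∀ θ Δθ : ℝ, θ ∈ S → θ + Δθ ∈ S →
      (∀ i, α (θ + Δθ) i = α θ i + Δθ * β i) ∧
      α₀ (θ + Δθ) = α₀ θ + Δθ * β₀ := by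

  intro θ Δθ hθ hθΔ
  have hdet : IsUnit (bordered Q y M).det := (Matrix.isUnit_iff_isUnit_det _).mp hInv
  set v : Fin n → ℝ := fun i => α (θ + Δθ) i - α θ i with hv
  set a0 : ℝ := α₀ (θ + Δθ) - α₀ θ with ha0
  have hsplit : ∀ f : Fin n → ℝ,
      ∑ i, f i = (∑ i ∈ O, f i + ∑ i ∈ M, f i) + ∑ i ∈ I, f i := by
    intro f
    rw [← hcover, Finset.sum_union, Finset.sum_union hOM]
    exact Finset.disjoint_union_left.mpr ⟨hOI, hMI⟩
  have hvO : ∀ i ∈ O, v i = 0 := by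
    intro i hi; simp [hv, hO _ hθ i hi, hO _ hθΔ i hi]
  have hvI : ∀ i ∈ I, v i = Δθ * d i := by
    intro i hi; simp only [hv, hI _ hθ i hi, hI _ hθΔ i hi]; ring
  set w : (Unit ⊕ ↥M) → ℝ := Sum.elim (fun _ => a0) (fun m : ↥M => v m.1) with hw
  have key : bordered Q y M *ᵥ w = (-Δθ) • rhsIVec Q y M I d := by
    funext j
    cases j with
    | inl u =>
      have h1 : y ⬝ᵥ v = 0 := by
        have : y ⬝ᵥ v = y ⬝ᵥ α (θ + Δθ) - y ⬝ᵥ α θ := by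
          simp only [dotProduct, hv]; rw [← Finset.sum_sub_distrib]; congr 1; funext i; ring
        rw [this, heq _ hθ, heq _ hθΔ]; ring
      have h2 : ∑ i ∈ M, y i * v i = -Δθ * ∑ i ∈ I, y i * d i := by
        have hs := hsplit (fun i => y i * v i)
        have hOz : ∑ i ∈ O, y i * v i = 0 :=
          Finset.sum_eq_zero fun i hi => by rw [hvO i hi, mul_zero]
        have hIz : ∑ i ∈ I, y i * v i = Δθ * ∑ i ∈ I, y i * d i := by
          rw [Finset.mul_sum]
          exact Finset.sum_congr rfl fun i hi => by rw [hvI i hi]; ring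
        have h1' : ∑ i, y i * v i = 0 := h1
        linarith [hs, hOz, hIz, h1']
      show ∑ x : Unit ⊕ ↥M, bordered Q y M (Sum.inl u) x * w x = _
      rw [Fintype.sum_sum_type]
      simp only [bordered, Matrix.fromBlocks_apply₁₁, Matrix.fromBlocks_apply₁₂,
        Matrix.zero_apply, Matrix.of_apply, hw, Sum.elim_inl, Sum.elim_inr,
        zero_mul, Finset.sum_const_zero, zero_add]
      rw [Finset.sum_coe_sort M (fun i => y i * v i), h2]
      simp [rhsIVec]
    | inr m =>
      have h1 : (Q *ᵥ v) m.1 + a0 * y m.1 = 0 := by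
        have e1 := hM _ hθΔ m.1 m.2
        have e2 := hM _ hθ m.1 m.2
        have : (Q *ᵥ v) m.1 = (Q *ᵥ α (θ + Δθ)) m.1 - (Q *ᵥ α θ) m.1 := by
          simp only [Matrix.mulVec, dotProduct, hv]
          rw [← Finset.sum_sub_distrib]; congr 1; funext i; ring
        simp only [Pi.add_apply, Pi.smul_apply, smul_eq_mul] at e1 e2
        rw [this, ha0]; linarith
      have h2 : ∑ i ∈ M, Q m.1 i * v i + a0 * y m.1 = -Δθ * ∑ i ∈ I, Q m.1 i * d i := by
        have hs := hsplit (fun i => Q m.1 i * v i)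
        have hOz : ∑ i ∈ O, Q m.1 i * v i = 0 :=
          Finset.sum_eq_zero fun i hi => by rw [hvO i hi, mul_zero]
        have hIz : ∑ i ∈ I, Q m.1 i * v i = Δθ * ∑ i ∈ I, Q m.1 i * d i := by
          rw [Finset.mul_sum]
          exact Finset.sum_congr rfl fun i hi => by rw [hvI i hi]; ring
        have h1' : ∑ i, Q m.1 i * v i + a0 * y m.1 = 0 := h1
        linarith [hs, hOz, hIz, h1']
      show ∑ x : Unit ⊕ ↥M, bordered Q y M (Sum.inr m) x * w x = _
      rw [Fintype.sum_sum_type]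
      simp only [bordered, Matrix.fromBlocks_apply₂₁, Matrix.fromBlocks_apply₂₂,
        Matrix.of_apply, Matrix.submatrix_apply, hw, Sum.elim_inl, Sum.elim_inr]
      rw [Finset.sum_coe_sort M (fun i => Q m.1 i * v i)]
      simp only [rhsIVec, Sum.elim_inr, Pi.smul_apply, smul_eq_mul,
        Finset.univ_unique, Finset.sum_const, Finset.card_singleton, one_smul]
      nlinarith [h2]
  have hw2 : w = Δθ • Sum.elim (fun _ : Unit => β₀) (fun m : ↥M => β m.1) := by
    have := congrArg (fun u => (bordered Q y M)⁻¹ *ᵥ u) key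
    simp only [Matrix.mulVec_mulVec, Matrix.nonsing_inv_mul _ hdet, Matrix.one_mulVec,
      Matrix.mulVec_smul] at this
    rw [this, hβtop]
    funext j; simp
  constructor
  · intro i
    have hi : i ∈ O ∪ M ∪ I := by rw [hcover]; exact Finset.mem_univ i
    rcases Finset.mem_union.mp hi with h | hiI
    · rcases Finset.mem_union.mp h with hiO | hiM
      · rw [hO _ hθ i hiO, hO _ hθΔ i hiO, hβO i hiO]; ring
      · have := congrFun hw2 (Sum.inr ⟨i, hiM⟩)
        simp only [hw, Sum.elim_inr, Pi.smul_apply, smul_eq_mul] at this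
        simp only [hv] at this; linarith
    · rw [hI _ hθ i hiI, hI _ hθΔ i hiI, hβI i hiI]; ring
  · have := congrFun hw2 (Sum.inl ())
    simp only [hw, Sum.elim_inl, Pi.smul_apply, smul_eq_mul] at this
    simp only [ha0] at this; linarith
end

section
/- Let M', O', I', B_O, B_I be pairwise disjoint subsets of {1,…,n} whose union is {1,…,n}, let d ∈ ℝⁿ, and assume Q is positive semidefinite. Let F be the set of triples (β̂₀, β̂, ĝ) ∈ ℝ × ℝⁿ × ℝⁿ such that ĝ = Q β̂ + β̂₀ y; ĝ_i ≥ 0 and β̂_i ≥ 0 for all i ∈ B_O; ĝ_i ≤ 0 and β̂_i ≤ d_i for all i ∈ B_I; ĝ_i = 0 for all i ∈ M'; β̂_i = 0 for all i ∈ O'; β̂_i = d_i for all i ∈ I'; and yᵀ β̂ = 0. Define the objective J(β̂₀, β̂, ĝ) = Σ_{i ∈ B_O} ĝ_i β̂_i + Σ_{i ∈ B_I} ĝ_i (β̂_i − d_i). If F is nonempty and (β̂₀*, β̂*, ĝ*) minimizes J over F, then J(β̂₀*, β̂*, ĝ*) = 0; consequently ĝ*_i β̂*_i = 0 for every i ∈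 B_O and ĝ*_i (β̂*_i − d_i) = 0 for every i ∈ B_I. -/
/-!
The constraints are linear, so at the minimiser the KKT conditions hold: the derivative of `J`
is nonnegative on the tangent cone of the polyhedron, and Farkas' lemma turns this into
multipliers. Let `m` and `ν` be the multipliers of the constraints on `β̂` and on `ĝ`, `s` the slack
of `β̂*` to its bound on `B_O ∪ B_I`, and `w = s + ν`. Testing stationarity in the directions
`(1, 0)` and `(0, w)` gives `J* = - m ⬝ w - wᵀ Q w`. Complementary slackness and the signs of the
multipliers give `m_i w_i ≥ 0`, and `Q` is positive semidefinite, so `J* ≤ 0`. Every term of `J` is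
nonnegative on the feasible set, hence `J* = 0` and each term vanishes.
-/

open Matrix BigOperators

/-- The feasible set of the QP (10): triples `(β̂₀, β̂, ĝ)` with `ĝ = Q β̂ + β̂₀ y`,
sign constraints on `B_O` and `B_I`, fixing constraints on `M'`, `O'`, `I'`,
and `yᵀ β̂ = 0`. -/
def FeasQP {n : ℕ} (Q : Matrix (Fin n) (Fin n) ℝ) (y d : Fin n → ℝ)
    (M' O' I' BO BI : Finset (Fin n))
    (b0 : ℝ) (b g : Fin n → ℝ) : Prop :=
  g = Q *ᵥ b + b0 • y ∧
  (∀ i ∈ BO, 0 ≤ g i ∧ 0 ≤ b i) ∧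
  (∀ i ∈ BI, g i ≤ 0 ∧ b i ≤ d i) ∧
  (∀ i ∈ M', g i = 0) ∧
  (∀ i ∈ O', b i = 0) ∧
  (∀ i ∈ I', b i = d i) ∧
  y ⬝ᵥ b = 0

/-- The objective `J(β̂₀, β̂, ĝ) = Σ_{i ∈ B_O} ĝ_i β̂_i + Σ_{i ∈ B_I} ĝ_i (β̂_i − d_i)`. -/
def Jobj {n : ℕ} (d : Fin n → ℝ) (BO BI : Finset (Fin n))
    (b g : Fin n → ℝ) : ℝ :=
  ∑ i ∈ BO, g i * b i + ∑ i ∈ BI, g i * (b i - d i)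

open Finset Filter Topology

section Farkas

variable {𝕜 V ι : Type*} [Field 𝕜] [LinearOrder 𝕜] [IsStrictOrderedRing 𝕜]
  [AddCommGroup V] [Module 𝕜 V]

theorem exists_nonneg_sum_smul_eq_of_forall_nonpos (f : ι → Module.Dual 𝕜 V)
    (g : Module.Dual 𝕜 V) (s : Finset ι) (h : ∀ x, (∀ i ∈ s, f i x ≤ 0) → g x ≤ 0) :
    ∃ c : ι → 𝕜, (∀ i, 0 ≤ c i) ∧ g = ∑ i ∈ s, c i • f i := by
  classical
  induction s using Finset.induction_on generalizing f g with
  | empty =>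
    refine ⟨0, fun _ => le_rfl, LinearMap.ext fun x => ?_⟩
    have := h (-x) (by simp)
    simpa using le_antisymm (h x (by simp)) (by simpa using this)
  | insert k s hk ih =>
    have sum_update (c : ι → 𝕜) (μ : 𝕜) :
        ∑ i ∈ insert k s, Function.update c k μ i • f i = μ • f k + ∑ i ∈ s, c i • f i := by
      rw [sum_insert hk, Function.update_self]
      congr 1
      exact sum_congr rfl fun i hi => by rw [Function.update_of_ne (ne_of_mem_of_not_mem hi hk)]
    by_cases hs : ∀ x, (∀ i ∈ s, f i x ≤ 0) → g x ≤ 0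
    · obtain ⟨c, hc, rfl⟩ := ih f g hs
      refine ⟨Function.update c k 0, fun i => ?_, by rw [sum_update, zero_smul, zero_add]⟩
      by_cases hi : i = k <;> simp [hi, hc]
    push Not at hs
    obtain ⟨x₀, hx₀, hgx₀⟩ := hs
    have hfk : 0 < f k x₀ := by
      by_contra! hle
      exact hgx₀.not_ge (h x₀ (by simpa [hle] using hx₀))
    -- Projecting along `x₀` makes the `k`-th constraint an equality and removes it.
    let π : Module.Dual 𝕜 V → Module.Dual 𝕜 V := fun φ => φ - (φ x₀ / f k x₀) • f k
    have hπ (φ : Module.Dual 𝕜 V) (x : V) : φ (x - (f k x / f k x₀) • x₀) = π φ x := by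
      simp only [π, map_sub, map_smul, LinearMap.sub_apply, LinearMap.smul_apply, smul_eq_mul]
      ring
    obtain ⟨c, hc, hg⟩ := ih (fun i => π (f i)) (π g) fun x hx => by
      rw [← hπ]
      refine h _ fun i hi => ?_
      rcases mem_insert.mp hi with rfl | hi
      · simp [hfk.ne']
      · rw [hπ]; exact hx i hi
    refine ⟨Function.update c k (g x₀ / f k x₀ - ∑ i ∈ s, c i * (f i x₀ / f k x₀)), fun i => ?_, ?_⟩
    · by_cases hi : i = k
      · rw [hi, Function.update_self]
        have : ∑ i ∈ s, c i * (f i x₀ / f k x₀) ≤ 0 := sum_nonpos fun i hi =>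
          mul_nonpos_of_nonneg_of_nonpos (hc i) (div_nonpos_of_nonpos_of_nonneg (hx₀ i hi) hfk.le)
        linarith [div_pos hgx₀ hfk]
      · simp [hi, hc]
    · rw [sum_update]
      calc g = (g x₀ / f k x₀) • f k + π g := by simp [π]
        _ = _ := by
          rw [hg]
          simp only [π, smul_sub, sum_sub_distrib, smul_smul, ← sum_smul]
          module

end Farkas

theorem nonneg_of_eventually_nonneg_mul_add_sq_mul {a b : ℝ}
    (h : ∀ᶠ t in 𝓝[>] (0 : ℝ), 0 ≤ t * a + t ^ 2 * b) : 0 ≤ a := by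
  have hlim : Tendsto (fun t : ℝ => a + t * b) (𝓝[>] 0) (𝓝 a) := by
    have : Continuous fun t : ℝ => a + t * b := by fun_prop
    simpa using (this.tendsto 0).mono_left nhdsWithin_le_nhds
  refine ge_of_tendsto hlim ?_
  filter_upwards [h, self_mem_nhdsWithin] with t ht (htpos : 0 < t)
  exact (mul_nonneg_iff_of_pos_left htpos).1 (by linarith)

section KKT

variable {V ι : Type*} [AddCommGroup V] [Module ℝ V] [Fintype ι]
  (f : ι → Module.Dual ℝ V) (a : ι → ℝ) {x₀ : V}

theorem eventually_forall_le_of_active (hx₀ : ∀ j, f j x₀ ≤ a j) {u : V}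
    (hu : ∀ j, f j x₀ = a j → f j u ≤ 0) :
    ∀ᶠ t in 𝓝[>] (0 : ℝ), ∀ j, f j (x₀ + t • u) ≤ a j := by
  refine Filter.eventually_all.2 fun j => ?_
  simp only [map_add, map_smul, smul_eq_mul]
  rcases (hx₀ j).eq_or_lt with hj | hj
  · filter_upwards [self_mem_nhdsWithin] with t (ht : 0 < t)
    nlinarith [hu j hj]
  · have : Continuous fun t : ℝ => f j x₀ + t * f j u := by fun_prop
    have hev : ∀ᶠ t in 𝓝 (0 : ℝ), f j x₀ + t * f j u < a j :=
      (this.tendsto 0).eventually_lt_const (by simpa using hj)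
    exact (hev.filter_mono nhdsWithin_le_nhds).mono fun _ h => h.le

theorem exists_kkt_multipliers (J : V → ℝ) (D : Module.Dual ℝ V) (S : V → ℝ)
    (hx₀ : ∀ j, f j x₀ ≤ a j)
    (hJ : ∀ u (t : ℝ), J (x₀ + t • u) = J x₀ + t * D u + t ^ 2 * S u)
    (hmin : ∀ x, (∀ j, f j x ≤ a j) → J x₀ ≤ J x) :
    ∃ c : ι → ℝ, (∀ j, 0 ≤ c j) ∧ (∀ j, c j * (a j - f j x₀) = 0) ∧
      ∀ x, D x + ∑ j, c j * f j x = 0 := by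
  classical
  have hD : ∀ u, (∀ j ∈ univ.filter fun j => f j x₀ = a j, f j u ≤ 0) → (-D) u ≤ 0 := by
    intro u hu
    have hev := eventually_forall_le_of_active f a hx₀ fun j hj => hu j (by simp [hj])
    suffices 0 ≤ D u by simpa using this
    refine nonneg_of_eventually_nonneg_mul_add_sq_mul (b := S u) ?_
    filter_upwards [hev] with t ht
    linarith [hmin _ ht, hJ u t]
  obtain ⟨c, hc, hcD⟩ := exists_nonneg_sum_smul_eq_of_forall_nonpos f (-D) _ hD
  refine ⟨fun j => if f j x₀ = a j then c j else 0, fun j => ite_nonneg (hc j) le_rfl,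
    fun j => by by_cases h : f j x₀ = a j <;> simp [h], fun x => ?_⟩
  have := LinearMap.congr_fun hcD x
  simp only [sum_filter, LinearMap.neg_apply, LinearMap.sum_apply, DFunLike.ite_apply,
    LinearMap.smul_apply, LinearMap.zero_apply, smul_eq_mul] at this
  simp only [ite_mul, zero_mul]
  linarith

theorem exists_kkt_multipliers_of_eq {κ : Type*} [Fintype κ] (E : κ → Module.Dual ℝ V) (e : κ → ℝ)
    (J : V → ℝ) (D : Module.Dual ℝ V) (S : V → ℝ)
    (hx₀ : ∀ j, f j x₀ ≤ a j) (hEx₀ : ∀ k, E k x₀ = e k)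
    (hJ : ∀ u (t : ℝ), J (x₀ + t • u) = J x₀ + t * D u + t ^ 2 * S u)
    (hmin : ∀ x, (∀ j, f j x ≤ a j) → (∀ k, E k x = e k) → J x₀ ≤ J x) :
    ∃ (c : ι → ℝ) (μ : κ → ℝ), (∀ j, 0 ≤ c j) ∧ (∀ j, c j * (a j - f j x₀) = 0) ∧
      ∀ x, D x + ∑ j, c j * f j x + ∑ k, μ k * E k x = 0 := by
  obtain ⟨c, hc, hcs, hstat⟩ := exists_kkt_multipliers (Sum.elim f (Sum.elim E (-E)))
    (Sum.elim a (Sum.elim e (-e))) J D S (by simp [Sum.forall, hx₀, hEx₀]) hJ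
    fun x hx => hmin x (fun j => hx (.inl j)) fun k =>
      le_antisymm (hx (.inr (.inl k))) (by simpa using hx (.inr (.inr k)))
  refine ⟨c ∘ Sum.inl, fun k => c (.inr (.inl k)) - c (.inr (.inr k)), fun j => hc _,
    fun j => hcs (.inl j), fun x => ?_⟩
  have := hstat x
  simp only [Fintype.sum_sum_type, Sum.elim_inl, Sum.elim_inr, Pi.neg_apply,
    LinearMap.neg_apply] at this
  simp only [Function.comp_apply, sub_mul, sum_sub_distrib]
  simp only [mul_neg, sum_neg_distrib] at this
  linarith

end KKT

section Objective

variable {n : ℕ} (d : Fin n → ℝ) (BO BI : Finset (Fin n))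

def boundSlack (b : Fin n → ℝ) : Fin n → ℝ :=
  fun i => (if i ∈ BO then b i else 0) + (if i ∈ BI then b i - d i else 0)

theorem Jobj_eq_dotProduct_boundSlack (b g : Fin n → ℝ) :
    Jobj d BO BI b g = g ⬝ᵥ boundSlack d BO BI b := by
  simp [Jobj, boundSlack, dotProduct, mul_add, sum_add_distrib, sum_ite_mem]

theorem boundSlack_add_smul (b u : Fin n → ℝ) (t : ℝ) :
    boundSlack d BO BI (b + t • u) = boundSlack d BO BI b + t • boundSlack 0 BO BI u := by
  ext i
  simp only [boundSlack, Pi.add_apply, Pi.smul_apply, Pi.zero_apply, smul_eq_mul]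
  split_ifs <;> ring

theorem Jobj_add_smul (b g u h : Fin n → ℝ) (t : ℝ) :
    Jobj d BO BI (b + t • u) (g + t • h) =
      Jobj d BO BI b g + t * (Jobj d BO BI b h + Jobj 0 BO BI u g) + t ^ 2 * Jobj 0 BO BI u h := by
  simp only [Jobj_eq_dotProduct_boundSlack, boundSlack_add_smul, add_dotProduct, dotProduct_add,
    smul_dotProduct, dotProduct_smul, smul_eq_mul]
  ring

variable {d BO BI}

theorem Jobj_nonneg {b g : Fin n → ℝ} (hBO : ∀ i ∈ BO, 0 ≤ g i ∧ 0 ≤ b i)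
    (hBI : ∀ i ∈ BI, g i ≤ 0 ∧ b i ≤ d i) : 0 ≤ Jobj d BO BI b g :=
  add_nonneg (sum_nonneg fun i hi => mul_nonneg (hBO i hi).1 (hBO i hi).2)
    (sum_nonneg fun i hi => mul_nonneg_of_nonpos_of_nonpos (hBI i hi).1 (sub_nonpos.2 (hBI i hi).2))

theorem Jobj_eq_zero_iff {b g : Fin n → ℝ} (hBO : ∀ i ∈ BO, 0 ≤ g i ∧ 0 ≤ b i)
    (hBI : ∀ i ∈ BI, g i ≤ 0 ∧ b i ≤ d i) :
    Jobj d BO BI b g = 0 ↔ (∀ i ∈ BO, g i * b i = 0) ∧ ∀ i ∈ BI, g i * (b i - d i) = 0 := by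
  have hO : ∀ i ∈ BO, 0 ≤ g i * b i := fun i hi => mul_nonneg (hBO i hi).1 (hBO i hi).2
  have hI : ∀ i ∈ BI, 0 ≤ g i * (b i - d i) := fun i hi =>
    mul_nonneg_of_nonpos_of_nonpos (hBI i hi).1 (sub_nonpos.2 (hBI i hi).2)
  rw [Jobj, add_eq_zero_iff_of_nonneg (sum_nonneg hO) (sum_nonneg hI), sum_eq_zero_iff_of_nonneg hO,
    sum_eq_zero_iff_of_nonneg hI]

section QuadraticProgram

variable {n : ℕ} (Q : Matrix (Fin n) (Fin n) ℝ) (y d : Fin n → ℝ) (M' O' I' BO BI : Finset (Fin n))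

def qpGradient : ℝ × (Fin n → ℝ) →ₗ[ℝ] Fin n → ℝ :=
  Q.mulVecLin ∘ₗ LinearMap.snd ℝ ℝ (Fin n → ℝ) + (LinearMap.fst ℝ ℝ (Fin n → ℝ)).smulRight y

@[simp]
theorem qpGradient_apply (x : ℝ × (Fin n → ℝ)) : qpGradient Q y x = Q *ᵥ x.2 + x.1 • y := rfl

/- The sign conditions (`qpIneq ≤ qpIneqBound`) and the fixing conditions (`qpEq = qpEqBound`)
of `FeasQP` in the variable `x = (β̂₀, β̂)`, one per coordinate; a condition at a coordinate
outside its index set is the trivial `0 ≤ 0` or `0 = 0`. -/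
def qpIneq : Fin 4 × Fin n → Module.Dual ℝ (ℝ × (Fin n → ℝ))
  | (0, i) => if i ∈ BO then -(LinearMap.proj i ∘ₗ qpGradient Q y) else 0
  | (1, i) => if i ∈ BO then -(LinearMap.proj i ∘ₗ LinearMap.snd ℝ ℝ _) else 0
  | (2, i) => if i ∈ BI then LinearMap.proj i ∘ₗ qpGradient Q y else 0
  | (3, i) => if i ∈ BI then LinearMap.proj i ∘ₗ LinearMap.snd ℝ ℝ _ else 0

def qpIneqBound : Fin 4 × Fin n → ℝ
  | (3, i) => if i ∈ BI then d i else 0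
  | _ => 0

def qpEq : Option (Fin 3 × Fin n) → Module.Dual ℝ (ℝ × (Fin n → ℝ))
  | some (0, i) => if i ∈ M' then LinearMap.proj i ∘ₗ qpGradient Q y else 0
  | some (1, i) => if i ∈ O' then LinearMap.proj i ∘ₗ LinearMap.snd ℝ ℝ _ else 0
  | some (2, i) => if i ∈ I' then LinearMap.proj i ∘ₗ LinearMap.snd ℝ ℝ _ else 0
  | none => ∑ i, y i • (LinearMap.proj i ∘ₗ LinearMap.snd ℝ ℝ _)

def qpEqBound : Option (Fin 3 × Fin n) → ℝ
  | some (2, i) => if i ∈ I' then d i else 0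
  | _ => 0

theorem feasQP_iff (x : ℝ × (Fin n → ℝ)) :
    FeasQP Q y d M' O' I' BO BI x.1 x.2 (qpGradient Q y x) ↔
      (∀ j, qpIneq Q y BO BI j x ≤ qpIneqBound d BI j) ∧
        ∀ k, qpEq Q y M' O' I' k x = qpEqBound d I' k := by
  simp only [FeasQP, qpGradient_apply, Pi.add_apply, Pi.smul_apply, smul_eq_mul, dotProduct,
    true_and, qpIneq, qpIneqBound, Prod.forall, Fin.forall_fin_succ, DFunLike.ite_apply,
    LinearMap.neg_apply, LinearMap.coe_comp, LinearMap.coe_proj, Function.comp_apply, Function.eval,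
    neg_add_rev, LinearMap.zero_apply, Fin.isValue, Fin.succ_zero_eq_one, LinearMap.coe_snd,
    Fin.succ_one_eq_two, Fin.reduceSucc, IsEmpty.forall_iff, and_true, qpEq, qpEqBound,
    Option.forall, LinearMap.coe_sum, LinearMap.coe_smul, Finset.sum_apply, ite_eq_right_iff]
  grind

/- The multipliers of the conditions on `ĝ_i`, resp. on `β̂_i`, collected coordinatewise. -/
def gMultiplier (c : Fin 4 × Fin n → ℝ) (μ : Option (Fin 3 × Fin n) → ℝ) : Fin n → ℝ := fun i =>
  (if i ∈ BI then c (2, i) else 0) - (if i ∈ BO then c (0, i) else 0) +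
    (if i ∈ M' then μ (some (0, i)) else 0)

def bMultiplier (c : Fin 4 × Fin n → ℝ) (μ : Option (Fin 3 × Fin n) → ℝ) : Fin n → ℝ := fun i =>
  (if i ∈ BI then c (3, i) else 0) - (if i ∈ BO then c (1, i) else 0) +
    (if i ∈ O' then μ (some (1, i)) else 0) + (if i ∈ I' then μ (some (2, i)) else 0)

theorem sum_qpIneq_add_sum_qpEq (c : Fin 4 × Fin n → ℝ) (μ : Option (Fin 3 × Fin n) → ℝ)
    (x : ℝ × (Fin n → ℝ)) :
    ∑ j, c j * qpIneq Q y BO BI j x + ∑ k, μ k * qpEq Q y M' O' I' k x =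
      bMultiplier O' I' BO BI c μ ⬝ᵥ x.2 + gMultiplier M' BO BI c μ ⬝ᵥ qpGradient Q y x +
        μ none * (y ⬝ᵥ x.2) := by
  simp only [Fintype.sum_prod_type, Fin.sum_univ_four, Fintype.sum_option, Fin.sum_univ_three,
    qpIneq, qpEq, DFunLike.ite_apply, dotProduct, bMultiplier, gMultiplier, mul_sum,
    ← sum_add_distrib]
  simp only [LinearMap.sum_apply, LinearMap.smul_apply, LinearMap.coe_comp,
    Function.comp_apply, LinearMap.neg_apply, LinearMap.zero_apply, LinearMap.coe_proj,
    Function.eval, LinearMap.snd_apply, smul_eq_mul, mul_sum, ← sum_add_distrib]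
  refine sum_congr rfl fun i _ => ?_
  split_ifs <;> ring

def jobjDeriv (b g : Fin n → ℝ) : Module.Dual ℝ (ℝ × (Fin n → ℝ)) where
  toFun x := Jobj d BO BI b (qpGradient Q y x) + Jobj 0 BO BI x.2 g
  map_add' x x' := by
    simp only [map_add, Jobj, Prod.snd_add, Pi.add_apply, Pi.zero_apply, sub_zero, add_mul, mul_add,
      sum_add_distrib]
    ring
  map_smul' r x := by
    simp only [map_smul, Jobj, Prod.smul_snd, Pi.smul_apply, Pi.zero_apply, sub_zero, smul_eq_mul,
      RingHom.id_apply, mul_add, mul_sum]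
    congr 1 <;> congr 1 <;> exact sum_congr rfl fun i _ => by ring

@[simp]
theorem jobjDeriv_apply (b g : Fin n → ℝ) (x : ℝ × (Fin n → ℝ)) :
    jobjDeriv Q y d BO BI b g x = Jobj d BO BI b (qpGradient Q y x) + Jobj 0 BO BI x.2 g := rfl

theorem Jobj_qpGradient_add_smul (x u : ℝ × (Fin n → ℝ)) (t : ℝ) :
    Jobj d BO BI (x + t • u).2 (qpGradient Q y (x + t • u)) =
      Jobj d BO BI x.2 (qpGradient Q y x) + t * jobjDeriv Q y d BO BI x.2 (qpGradient Q y x) u +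
        t ^ 2 * Jobj 0 BO BI u.2 (qpGradient Q y u) := by
  rw [map_add, map_smul, Prod.snd_add, Prod.smul_snd, Jobj_add_smul, jobjDeriv_apply]

variable {Q y d M' O' I' BO BI}

theorem Jobj_boundSlack_add (hBOBI : Disjoint BO BI) {b g ν : Fin n → ℝ}
    (hgν : ∀ i, g i * ν i = 0) :
    Jobj 0 BO BI (boundSlack d BO BI b + ν) g = Jobj d BO BI b g := by
  simp only [Jobj, Pi.add_apply, Pi.zero_apply, sub_zero, boundSlack]
  congr 1 <;> refine sum_congr rfl fun i hi => ?_
  · simp [hi, disjoint_left.1 hBOBI hi, mul_add, hgν]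
  · simp [hi, disjoint_right.1 hBOBI hi, mul_add, hgν]

theorem Jobj_nonpos_of_stationary (hQpsd : ∀ v : Fin n → ℝ, 0 ≤ v ⬝ᵥ (Q *ᵥ v))
    {bs gs m ν : Fin n → ℝ} {κ : ℝ}
    (hstat : ∀ x, jobjDeriv Q y d BO BI bs gs x + m ⬝ᵥ x.2 + ν ⬝ᵥ qpGradient Q y x +
      κ * (y ⬝ᵥ x.2) = 0)
    (hm : ∀ i, 0 ≤ m i * (boundSlack d BO BI bs i + ν i))
    (hg : Jobj 0 BO BI (boundSlack d BO BI bs + ν) gs = Jobj d BO BI bs gs) :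
    Jobj d BO BI bs gs ≤ 0 := by
  set w := boundSlack d BO BI bs + ν
  have hyw : y ⬝ᵥ w = 0 := by
    have h0 : Jobj 0 BO BI 0 gs = 0 := by simp [Jobj]
    have := hstat (1, 0)
    simp only [jobjDeriv_apply, h0, qpGradient_apply, mulVec_zero, one_smul, zero_add,
      dotProduct_zero, mul_zero, add_zero, Jobj_eq_dotProduct_boundSlack] at this
    simpa [w, dotProduct_add, dotProduct_comm ν] using this
  have hquad : Jobj d BO BI bs (Q *ᵥ w) + ν ⬝ᵥ (Q *ᵥ w) = w ⬝ᵥ (Q *ᵥ w) := by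
    rw [Jobj_eq_dotProduct_boundSlack, dotProduct_comm _ (boundSlack _ _ _ _), ← add_dotProduct]
  have hmw : 0 ≤ m ⬝ᵥ w := sum_nonneg fun i _ => hm i
  have := hstat (0, w)
  simp only [jobjDeriv_apply, qpGradient_apply, zero_smul, add_zero, hg, hyw, mul_zero] at this
  linarith [hQpsd w]

theorem qpGradient_mul_gMultiplier_eq_zero {x₀ : ℝ × (Fin n → ℝ)}
    (hfeas : FeasQP Q y d M' O' I' BO BI x₀.1 x₀.2 (qpGradient Q y x₀))
    {c : Fin 4 × Fin n → ℝ} (μ : Option (Fin 3 × Fin n) → ℝ)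
    (hcs : ∀ j, c j * (qpIneqBound d BI j - qpIneq Q y BO BI j x₀) = 0) (i : Fin n) :
    qpGradient Q y x₀ i * gMultiplier M' BO BI c μ i = 0 := by
  have h0 := hcs (0, i)
  have h2 := hcs (2, i)
  have hM : i ∈ M' → qpGradient Q y x₀ i = 0 := hfeas.2.2.2.1 i
  simp only [qpIneq, qpIneqBound, DFunLike.ite_apply, LinearMap.neg_apply, LinearMap.coe_comp,
    Function.comp_apply, LinearMap.coe_proj, Function.eval, LinearMap.zero_apply] at h0 h2
  simp only [gMultiplier]
  grind

theorem bMultiplier_mul_nonneg (hM'O' : Disjoint M' O') (hM'I' : Disjoint M' I')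
    (hM'BO : Disjoint M' BO) (hM'BI : Disjoint M' BI) (hO'BO : Disjoint O' BO)
    (hO'BI : Disjoint O' BI) (hI'BO : Disjoint I' BO) (hI'BI : Disjoint I' BI)
    (hBOBI : Disjoint BO BI) {x₀ : ℝ × (Fin n → ℝ)} {c : Fin 4 × Fin n → ℝ}
    (μ : Option (Fin 3 × Fin n) → ℝ) (hc : ∀ j, 0 ≤ c j)
    (hcs : ∀ j, c j * (qpIneqBound d BI j - qpIneq Q y BO BI j x₀) = 0) (i : Fin n) :
    0 ≤ bMultiplier O' I' BO BI c μ i *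
      (boundSlack d BO BI x₀.2 i + gMultiplier M' BO BI c μ i) := by
  have h1 := hcs (1, i)
  have h3 := hcs (3, i)
  simp only [qpIneq, qpIneqBound, DFunLike.ite_apply, LinearMap.neg_apply, LinearMap.coe_comp,
    Function.comp_apply, LinearMap.coe_proj, Function.eval, LinearMap.zero_apply,
    LinearMap.snd_apply] at h1 h3
  simp only [bMultiplier, gMultiplier, boundSlack]
  by_cases hBO : i ∈ BO
  · have hBI := disjoint_left.1 hBOBI hBO
    have hM' := disjoint_right.1 hM'BO hBO
    have hO' := disjoint_right.1 hO'BO hBO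
    have hI' := disjoint_right.1 hI'BO hBO
    simp only [hBO, hBI, hM', hO', hI', if_true, if_false] at h1 ⊢
    nlinarith [hc (0, i), hc (1, i)]
  by_cases hBI : i ∈ BI
  · have hM' := disjoint_right.1 hM'BI hBI
    have hO' := disjoint_right.1 hO'BI hBI
    have hI' := disjoint_right.1 hI'BI hBI
    simp only [hBO, hBI, hM', hO', hI', if_true, if_false] at h3 ⊢
    nlinarith [hc (2, i), hc (3, i)]
  by_cases hM' : i ∈ M'
  · simp [hM', hBO, hBI, disjoint_left.1 hM'O' hM', disjoint_left.1 hM'I' hM']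
  · simp [hM', hBO, hBI]

theorem exists_qp_kkt_multipliers (hM'O' : Disjoint M' O') (hM'I' : Disjoint M' I')
    (hM'BO : Disjoint M' BO) (hM'BI : Disjoint M' BI) (hO'BO : Disjoint O' BO)
    (hO'BI : Disjoint O' BI) (hI'BO : Disjoint I' BO) (hI'BI : Disjoint I' BI)
    (hBOBI : Disjoint BO BI) {x₀ : ℝ × (Fin n → ℝ)}
    (hfeas : FeasQP Q y d M' O' I' BO BI x₀.1 x₀.2 (qpGradient Q y x₀))
    (hmin : ∀ x : ℝ × (Fin n → ℝ), FeasQP Q y d M' O' I' BO BI x.1 x.2 (qpGradient Q y x) →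
      Jobj d BO BI x₀.2 (qpGradient Q y x₀) ≤ Jobj d BO BI x.2 (qpGradient Q y x)) :
    ∃ (m ν : Fin n → ℝ) (κ : ℝ),
      (∀ x, jobjDeriv Q y d BO BI x₀.2 (qpGradient Q y x₀) x + m ⬝ᵥ x.2 +
        ν ⬝ᵥ qpGradient Q y x + κ * (y ⬝ᵥ x.2) = 0) ∧
      (∀ i, qpGradient Q y x₀ i * ν i = 0) ∧
      ∀ i, 0 ≤ m i * (boundSlack d BO BI x₀.2 i + ν i) := by
  obtain ⟨hineq, heq⟩ := (feasQP_iff Q y d M' O' I' BO BI x₀).1 hfeas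
  obtain ⟨c, μ, hc, hcs, hstat⟩ := exists_kkt_multipliers_of_eq (qpIneq Q y BO BI)
    (qpIneqBound d BI) (qpEq Q y M' O' I') (qpEqBound d I')
    (fun x => Jobj d BO BI x.2 (qpGradient Q y x)) (jobjDeriv Q y d BO BI x₀.2 (qpGradient Q y x₀))
    (fun u => Jobj 0 BO BI u.2 (qpGradient Q y u)) hineq heq
    (Jobj_qpGradient_add_smul Q y d BO BI x₀)
    fun x hx hE => hmin x ((feasQP_iff Q y d M' O' I' BO BI x).2 ⟨hx, hE⟩)
  refine ⟨bMultiplier O' I' BO BI c μ, gMultiplier M' BO BI c μ, μ none, fun x => ?_,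
    qpGradient_mul_gMultiplier_eq_zero hfeas μ hcs,
    bMultiplier_mul_nonneg hM'O' hM'I' hM'BO hM'BI hO'BO hO'BI hI'BO hI'BI hBOBI μ hc hcs⟩
  linarith [hstat x, sum_qpIneq_add_sum_qpEq Q y M' O' I' BO BI c μ x]

end QuadraticProgram

theorem partition_qp_optimal_value_zero_general
    (n : ℕ)
    (Q : Matrix (Fin n) (Fin n) ℝ)
    (hQpsd : ∀ v : Fin n → ℝ, 0 ≤ v ⬝ᵥ (Q *ᵥ v))
    (y d : Fin n → ℝ)
    (M' O' I' BO BI : Finset (Fin n))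
    (h1 : Disjoint M' O') (h2 : Disjoint M' I') (h3 : Disjoint M' BO) (h4 : Disjoint M' BI)
    (h6 : Disjoint O' BO) (h7 : Disjoint O' BI)
    (h8 : Disjoint I' BO) (h9 : Disjoint I' BI) (h10 : Disjoint BO BI)
    (b0s : ℝ) (bs gs : Fin n → ℝ)
    (hfeas : FeasQP Q y d M' O' I' BO BI b0s bs gs)
    (hmin : ∀ (b0 : ℝ) (b g : Fin n → ℝ), FeasQP Q y d M' O' I' BO BI b0 b g →
      Jobj d BO BI bs gs ≤ Jobj d BO BI b g) :
    Jobj d BO BI bs gs = 0 ∧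
    (∀ i ∈ BO, gs i * bs i = 0) ∧
    (∀ i ∈ BI, gs i * (bs i - d i) = 0) := by
  obtain ⟨rfl, hBO, hBI, -⟩ := id hfeas
  obtain ⟨m, ν, κ, hstat, hgν, hm⟩ := exists_qp_kkt_multipliers h1 h2 h3 h4 h6 h7 h8 h9 h10
    (x₀ := (b0s, bs)) hfeas fun x hx => hmin x.1 x.2 _ hx
  have hJ : Jobj d BO BI bs (Q *ᵥ bs + b0s • y) = 0 :=
    le_antisymm (Jobj_nonpos_of_stationary hQpsd hstat hm (Jobj_boundSlack_add h10 hgν))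
      (Jobj_nonneg hBO hBI)
  exact ⟨hJ, (Jobj_eq_zero_iff hBO hBI).1 hJ⟩

/-- Theorem 2: the optimal value of the QP (10) is zero, hence the optimal solution
satisfies the complementarity conditions. -/
theorem partition_qp_optimal_value_zero
    (n : ℕ) (hn : 0 < n)
    (Q : Matrix (Fin n) (Fin n) ℝ) (hQsym : Q.IsSymm)
    (hQpsd : ∀ v : Fin n → ℝ, 0 ≤ v ⬝ᵥ (Q *ᵥ v))
    (y d : Fin n → ℝ)
    (M' O' I' BO BI : Finset (Fin n))
    (h1 : Disjoint M' O') (h2 : Disjoint M' I') (h3 : Disjoint M' BO) (h4 : Disjoint M' BI)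
    (h5 : Disjoint O' I') (h6 : Disjoint O' BO) (h7 : Disjoint O' BI)
    (h8 : Disjoint I' BO) (h9 : Disjoint I' BI) (h10 : Disjoint BO BI)
    (hcover : M' ∪ O' ∪ I' ∪ BO ∪ BI = Finset.univ)
    (b0s : ℝ) (bs gs : Fin n → ℝ)
    (hfeas : FeasQP Q y d M' O' I' BO BI b0s bs gs)
    (hmin : ∀ (b0 : ℝ) (b g : Fin n → ℝ), FeasQP Q y d M' O' I' BO BI b0 b g →
      Jobj d BO BI bs gs ≤ Jobj d BO BI b g) :
    Jobj d BO BI bs gs = 0 ∧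
    (∀ i ∈ BO, gs i * bs i = 0) ∧
    (∀ i ∈ BI, gs i * (bs i - d i) = 0) :=
  partition_qp_optimal_value_zero_general n Q hQpsd y d M' O' I' BO BI h1 h2 h3 h4 h6 h7 h8 h9 h10
    b0s bs gs hfeas hmin
end Objective
end

section
/- Let Q̃ be a symmetric positive semidefinite n×n real matrix, ỹ, r ∈ ℝⁿ, and r₀ ∈ ℝ. Let M, B, T be a partition of {1,…,n}. Suppose β̃, ξ, ν̃, μ̃ ∈ ℝⁿ and ρ ∈ ℝ satisfy: 2 Q̃ β̃ + r + Q̃ ξ + ν̃ + ρ ỹ = 0; r₀ + ξᵀ ỹ = 0; ξ = μ̃; ν̃_i = 0 for all i ∈ M; μ̃_i = 0 for all i ∈ T; and ν̃_i ≤ 0 and μ̃_i ≤ 0 for all i ∈ B. Then −β̃ᵀ Q̃ β̃ − ρ r₀ + ξᵀ r = −(β̃ + ξ)ᵀ Q̃ (β̃ + ξ) − μ̃ᵀ ν̃, and in particular −β̃ᵀ Q̃ β̃ − ρ r₀ + ξᵀ r ≤ 0. -/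
open Matrix BigOperators

/-- The bound on the dual objective of the partition QP: under the dual feasibility
constraints, `−β̃ᵀ Q̃ β̃ − ρ r₀ + ξᵀ r = −(β̃ + ξ)ᵀ Q̃ (β̃ + ξ) − μ̃ᵀ ν̃ ≤ 0`. -/
theorem dual_objective_nonpositive
    (n : ℕ) (hn : 0 < n)
    (Qt : Matrix (Fin n) (Fin n) ℝ) (hsym : Qt.IsSymm)
    (hpsd : ∀ v : Fin n → ℝ, 0 ≤ v ⬝ᵥ (Qt *ᵥ v))
    (yt r : Fin n → ℝ) (r0 : ℝ)
    (M B T : Finset (Fin n))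
    (hMB : Disjoint M B) (hMT : Disjoint M T) (hBT : Disjoint B T)
    (hcover : M ∪ B ∪ T = Finset.univ)
    (bt ξ νt μt : Fin n → ℝ) (ρ : ℝ)
    (h1 : (2 : ℝ) • (Qt *ᵥ bt) + r + Qt *ᵥ ξ + νt + ρ • yt = 0)
    (h2 : r0 + ξ ⬝ᵥ yt = 0)
    (h3 : ξ = μt)
    (h4 : ∀ i ∈ M, νt i = 0)
    (h5 : ∀ i ∈ T, μt i = 0)
    (h6 : ∀ i ∈ B, νt i ≤ 0 ∧ μt i ≤ 0) :
    (-(bt ⬝ᵥ (Qt *ᵥ bt)) - ρ * r0 + ξ ⬝ᵥ r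
        = -((bt + ξ) ⬝ᵥ (Qt *ᵥ (bt + ξ))) - μt ⬝ᵥ νt) ∧
    -(bt ⬝ᵥ (Qt *ᵥ bt)) - ρ * r0 + ξ ⬝ᵥ r ≤ 0 := by
  have hsymm : ∀ v w : Fin n → ℝ, v ⬝ᵥ (Qt *ᵥ w) = w ⬝ᵥ (Qt *ᵥ v) := by
    intro v w
    rw [Matrix.dotProduct_mulVec, ← Matrix.mulVec_transpose, hsym.eq,
      dotProduct_comm]
  have hr : r = -((2:ℝ) • (Qt *ᵥ bt) + Qt *ᵥ ξ + νt + ρ • yt) := by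
    funext i
    have := congrFun h1 i
    simp only [Pi.add_apply, Pi.smul_apply, Pi.zero_apply, Pi.neg_apply,
      smul_eq_mul] at this ⊢
    linarith
  have hr0 : r0 = -(ξ ⬝ᵥ yt) := by linarith
  have hμν : (0:ℝ) ≤ μt ⬝ᵥ νt := by
    rw [dotProduct]
    apply Finset.sum_nonneg
    intro i _
    have hi : i ∈ M ∪ B ∪ T := by rw [hcover]; exact Finset.mem_univ i
    simp only [Finset.mem_union] at hi
    rcases hi with (hM | hB) | hT
    · rw [h4 i hM]; ring_nf; simp
    · have := h6 i hB; nlinarith [this.1, this.2]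
    · rw [h5 i hT]; simp
  have key : -(bt ⬝ᵥ (Qt *ᵥ bt)) - ρ * r0 + ξ ⬝ᵥ r
      = -((bt + ξ) ⬝ᵥ (Qt *ᵥ (bt + ξ))) - μt ⬝ᵥ νt := by
    have hexp : (bt + ξ) ⬝ᵥ (Qt *ᵥ (bt + ξ))
        = bt ⬝ᵥ (Qt *ᵥ bt) + 2 * (ξ ⬝ᵥ (Qt *ᵥ bt)) + ξ ⬝ᵥ (Qt *ᵥ ξ) := by
      rw [Matrix.mulVec_add, add_dotProduct,
        dotProduct_add, dotProduct_add, hsymm bt ξ]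
      ring
    rw [hr, hr0, hexp, dotProduct_neg, dotProduct_add,
      dotProduct_add, dotProduct_add, dotProduct_smul,
      dotProduct_smul, ← h3]
    simp only [smul_eq_mul]
    ring
  refine ⟨key, ?_⟩
  rw [key]
  have := hpsd (bt + ξ)
  linarith
end

section
/- Let Q be a symmetric positive semidefinite n×n real matrix, y ∈ ℝⁿ, C ∈ ℝⁿ, ε₁ ≥ 0, ε₂ ≥ 0, and let (M, O, I) be a partition of {1,…,n}. Suppose α ∈ ℝⁿ and α₀ ∈ ℝ satisfy the relaxed optimality conditions: yᵀα = 0; for every i ∈ M, |(Qα + α₀ y)_i − 1| ≤ ε₁ and 0 ≤ α_i ≤ C_i; for every i ∈ O, (Qα + α₀ y)_i ≥ 1 − ε₁ and −ε₂ ≤ α_i ≤ 0; for every i ∈ I, (Qα + α₀ y)_i ≤ 1 + ε₁ and C_i ≤ α_i ≤ C_i + ε₂. Then there exist p, q ∈ ℝⁿ with |p_i| ≤ ε₁ and 0 ≤ q_i ≤ ε₂ for all i, such that α is an optimal solution of the perturbed problem: maximize −(1/2) α'ᵀ Q α' + (𝟙 + p)ᵀ α' over all α' ∈ ℝⁿ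 with yᵀ α' = 0 and −q_i ≤ α'_i ≤ C_i + q_i for all i; that is, for every such feasible α', −(1/2) α'ᵀ Q α' + (𝟙 + p)ᵀ α' ≤ −(1/2) αᵀ Q α + (𝟙 + p)ᵀ α. -/
open Matrix BigOperators

/-- Theorem 3: a suboptimal solution (satisfying the relaxed optimality conditions
with tolerances `ε₁`, `ε₂`) is the exact optimal solution of a perturbed problem
with perturbation vectors `p`, `q` bounded by `ε₁`, `ε₂`. -/
theorem suboptimal_is_optimal_of_perturbed
    (n : ℕ) (hn : 0 < n)
    (Q : Matrix (Fin n) (Fin n) ℝ) (hsym : Q.IsSymm)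
    (hpsd : ∀ v : Fin n → ℝ, 0 ≤ v ⬝ᵥ (Q *ᵥ v))
    (y C : Fin n → ℝ) (ε₁ ε₂ : ℝ) (hε₁ : 0 ≤ ε₁) (hε₂ : 0 ≤ ε₂)
    (M O I : Finset (Fin n))
    (hMO : Disjoint M O) (hMI : Disjoint M I) (hOI : Disjoint O I)
    (hcover : M ∪ O ∪ I = Finset.univ)
    (α : Fin n → ℝ) (α₀ : ℝ)
    (heq : y ⬝ᵥ α = 0)
    (hM : ∀ i ∈ M, |(Q *ᵥ α + α₀ • y) i - 1| ≤ ε₁ ∧ 0 ≤ α i ∧ α i ≤ C i)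
    (hO : ∀ i ∈ O, 1 - ε₁ ≤ (Q *ᵥ α + α₀ • y) i ∧ -ε₂ ≤ α i ∧ α i ≤ 0)
    (hI : ∀ i ∈ I, (Q *ᵥ α + α₀ • y) i ≤ 1 + ε₁ ∧ C i ≤ α i ∧ α i ≤ C i + ε₂) :
    ∃ p q : Fin n → ℝ,
      (∀ i, |p i| ≤ ε₁) ∧ (∀ i, 0 ≤ q i ∧ q i ≤ ε₂) ∧
      ∀ α' : Fin n → ℝ, y ⬝ᵥ α' = 0 →
        (∀ i, -q i ≤ α' i ∧ α' i ≤ C i + q i) →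
        -(1 / 2) * (α' ⬝ᵥ (Q *ᵥ α')) + (fun i => 1 + p i) ⬝ᵥ α'
          ≤ -(1 / 2) * (α ⬝ᵥ (Q *ᵥ α)) + (fun i => 1 + p i) ⬝ᵥ α := by
  classical
  set g : Fin n → ℝ := Q *ᵥ α + α₀ • y with hg
  -- every index is in exactly one of M, O, I
  have hmem : ∀ i : Fin n, i ∈ M ∨ i ∈ O ∨ i ∈ I := by
    intro i
    have : i ∈ M ∪ O ∪ I := by rw [hcover]; exact Finset.mem_univ i
    simpa [Finset.mem_union, or_assoc] using this
  refine ⟨fun i => if i ∈ M then g i - 1 else if i ∈ O then min (g i - 1) 0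
      else max (g i - 1) 0,
    fun i => if i ∈ M then 0 else if i ∈ O then -α i else α i - C i, ?_, ?_, ?_⟩
  · intro i
    by_cases hiM : i ∈ M
    · simpa [hiM] using (hM i hiM).1
    by_cases hiO : i ∈ O
    · have h1 := (hO i hiO).1
      simp only [hiM, hiO, if_false, if_true]
      rw [abs_le]
      constructor
      · exact le_min (by linarith) (by linarith)
      · exact le_trans (min_le_right _ _) hε₁
    · have hiI : i ∈ I := (hmem i).resolve_left hiM |>.resolve_left hiO
      have h1 := (hI i hiI).1
      simp only [hiM, hiO, if_false]
      rw [abs_le]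
      constructor
      · exact le_trans (by linarith) (le_max_right _ _)
      · exact max_le (by linarith) hε₁
  · intro i
    by_cases hiM : i ∈ M
    · simp [hiM, hε₂]
    by_cases hiO : i ∈ O
    · have h := (hO i hiO).2
      simp only [hiM, hiO, if_false, if_true]
      constructor <;> linarith [h.1, h.2]
    · have hiI : i ∈ I := (hmem i).resolve_left hiM |>.resolve_left hiO
      have h := (hI i hiI).2
      simp only [hiM, hiO, if_false]
      constructor <;> linarith [h.1, h.2]
  · intro α' heq' hbox
    set p : Fin n → ℝ := fun i => if i ∈ M then g i - 1 else if i ∈ O then min (g i - 1) 0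
      else max (g i - 1) 0 with hp
    set d : Fin n → ℝ := fun i => α' i - α i with hd
    have hα' : α' = α + d := by funext i; simp [hd]
    -- symmetry of the bilinear form
    have symdot : ∀ v w : Fin n → ℝ, v ⬝ᵥ (Q *ᵥ w) = w ⬝ᵥ (Q *ᵥ v) := by
      intro v w
      rw [Matrix.dotProduct_mulVec, ← Matrix.mulVec_transpose, hsym.eq,
        dotProduct_comm]
    have hyd : y ⬝ᵥ d = 0 := by
      have : y ⬝ᵥ α' = y ⬝ᵥ α + y ⬝ᵥ d := by rw [hα', dotProduct_add]
      rw [heq', heq] at this; linarith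
    -- first-order term is termwise nonpositive
    have hsum : ∑ i, (1 + p i - g i) * d i ≤ 0 := by
      apply Finset.sum_nonpos
      intro i _
      by_cases hiM : i ∈ M
      · simp [hp, hiM]
      by_cases hiO : i ∈ O
      · have h1 : 1 + p i - g i ≤ 0 := by
          simp only [hp, hiM, hiO, if_false, if_true]
          have := min_le_left (g i - 1) 0
          linarith
        have h2 : 0 ≤ d i := by
          have := (hbox i).1
          simp only [hiM, hiO, if_false, if_true] at this
          simp only [hd]
          linarith
        exact mul_nonpos_of_nonpos_of_nonneg h1 h2
      · have hiI : i ∈ I := (hmem i).resolve_left hiM |>.resolve_left hiO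
        have h1 : 0 ≤ 1 + p i - g i := by
          simp only [hp, hiM, hiO, if_false]
          have := le_max_left (g i - 1) 0
          linarith
        have h2 : d i ≤ 0 := by
          have := (hbox i).2
          simp only [hiM, hiO, if_false] at this
          simp only [hd]
          linarith
        exact mul_nonpos_of_nonneg_of_nonpos h1 h2
    have hgd : g ⬝ᵥ d = α ⬝ᵥ (Q *ᵥ d) := by
      rw [hg, add_dotProduct, smul_dotProduct, hyd, smul_zero,
        add_zero, dotProduct_comm, symdot]
    have hud : (fun i => 1 + p i) ⬝ᵥ d - g ⬝ᵥ d = ∑ i, (1 + p i - g i) * d i := by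
      simp only [dotProduct, ← Finset.sum_sub_distrib]
      congr 1; funext i; ring
    have hexp : α' ⬝ᵥ (Q *ᵥ α')
        = α ⬝ᵥ (Q *ᵥ α) + 2 * (α ⬝ᵥ (Q *ᵥ d)) + d ⬝ᵥ (Q *ᵥ d) := by
      rw [hα', Matrix.mulVec_add, add_dotProduct, dotProduct_add,
        dotProduct_add, symdot d α]
      ring
    have hua : (fun i => 1 + p i) ⬝ᵥ α' = (fun i => 1 + p i) ⬝ᵥ α + (fun i => 1 + p i) ⬝ᵥ d := by
      rw [hα', dotProduct_add]
    have hpsd' := hpsd d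
    rw [hexp, hua]
    rw [← hud, hgd] at hsum
    linarith
end

section
/- Let Q be a symmetric positive semidefinite n×n real matrix, y, p, q, C ∈ ℝⁿ, and α ∈ ℝⁿ. Suppose there exist ξ⁺, ξ⁻ ∈ ℝⁿ with ξ⁺ ≥ 0 and ξ⁻ ≥ 0, and κ ∈ ℝ, such that: −Qα + 𝟙 + p + ξ⁻ − ξ⁺ + κ y = 0; ξ⁻_i (α_i + q_i) = 0 and ξ⁺_i (C_i + q_i − α_i) = 0 for all i; −q_i ≤ α_i ≤ C_i + q_i for all i; and yᵀα = 0. Then α maximizes the perturbed dual objective: for every α' ∈ ℝⁿ with yᵀα' = 0 and −q_i ≤ α'_i ≤ C_i + q_i for all i, one has −(1/2) α'ᵀ Q α' + (𝟙 + p)ᵀ α' ≤ −(1/2) αᵀ Q α + (𝟙 + p)ᵀ α. -/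
open Matrix BigOperators

/-- For a positive semidefinite `Q`, the KKT conditions of the perturbed dual problem
imply that `α` maximizes the perturbed dual objective over the feasible set. -/
theorem perturbed_kkt_implies_optimal
    (n : ℕ) (hn : 0 < n)
    (Q : Matrix (Fin n) (Fin n) ℝ) (hsym : Q.IsSymm)
    (hpsd : ∀ v : Fin n → ℝ, 0 ≤ v ⬝ᵥ (Q *ᵥ v))
    (y p q C α : Fin n → ℝ)
    (ξp ξm : Fin n → ℝ) (κ : ℝ)
    (hξp : ∀ i, 0 ≤ ξp i) (hξm : ∀ i, 0 ≤ ξm i)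
    (hstat : ∀ i, -(Q *ᵥ α) i + 1 + p i + ξm i - ξp i + κ * y i = 0)
    (hcomp₁ : ∀ i, ξm i * (α i + q i) = 0)
    (hcomp₂ : ∀ i, ξp i * (C i + q i - α i) = 0)
    (hbox : ∀ i, -q i ≤ α i ∧ α i ≤ C i + q i)
    (heq : y ⬝ᵥ α = 0) :
    ∀ α' : Fin n → ℝ, y ⬝ᵥ α' = 0 →
      (∀ i, -q i ≤ α' i ∧ α' i ≤ C i + q i) →
      -(1 / 2) * (α' ⬝ᵥ (Q *ᵥ α')) + (fun i => 1 + p i) ⬝ᵥ α'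
        ≤ -(1 / 2) * (α ⬝ᵥ (Q *ᵥ α)) + (fun i => 1 + p i) ⬝ᵥ α := by
  intro α' hy' hbox'
  have hsymdot : ∀ u v : Fin n → ℝ, u ⬝ᵥ (Q *ᵥ v) = v ⬝ᵥ (Q *ᵥ u) := by
    intro u v
    simp only [dotProduct, mulVec, Finset.mul_sum]
    rw [Finset.sum_comm]
    refine Finset.sum_congr rfl fun i _ => Finset.sum_congr rfl fun j _ => ?_
    rw [hsym.apply i j]; ring
  set d : Fin n → ℝ := fun i => α' i - α i with hd
  have hα' : α' = α + d := by funext i; simp [hd]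
  have hQd : 0 ≤ d ⬝ᵥ (Q *ᵥ d) := hpsd d
  have hexp : α' ⬝ᵥ (Q *ᵥ α')
      = α ⬝ᵥ (Q *ᵥ α) + 2 * (d ⬝ᵥ (Q *ᵥ α)) + d ⬝ᵥ (Q *ᵥ d) := by
    rw [hα', mulVec_add, dotProduct_add, add_dotProduct, add_dotProduct,
      hsymdot α d]
    ring
  have hyd : ∑ i, y i * d i = 0 := by
    have : ∑ i, y i * d i = y ⬝ᵥ α' - y ⬝ᵥ α := by
      simp only [dotProduct, ← Finset.sum_sub_distrib]
      exact Finset.sum_congr rfl fun i _ => by simp [hd]; ring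
    rw [this, heq, hy']; ring
  have hlin : (fun i => 1 + p i) ⬝ᵥ α' - (fun i => 1 + p i) ⬝ᵥ α
      - d ⬝ᵥ (Q *ᵥ α) ≤ 0 := by
    have h1 : (fun i => 1 + p i) ⬝ᵥ α' - (fun i => 1 + p i) ⬝ᵥ α - d ⬝ᵥ (Q *ᵥ α)
        = ∑ i, (d i * (ξp i - ξm i) - κ * (y i * d i)) := by
      simp only [dotProduct, ← Finset.sum_sub_distrib]
      refine Finset.sum_congr rfl fun i _ => ?_
      simp only [hd]
      linear_combination (α' i - α i) * hstat i
    rw [h1, Finset.sum_sub_distrib, ← Finset.mul_sum, hyd]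
    simp only [mul_zero, sub_zero]
    apply Finset.sum_nonpos
    intro i _
    have h2 : 0 ≤ ξp i * (C i + q i - α' i) :=
      mul_nonneg (hξp i) (by linarith [(hbox' i).2])
    have h3 : 0 ≤ ξm i * (α' i + q i) :=
      mul_nonneg (hξm i) (by linarith [(hbox' i).1])
    have := hcomp₁ i
    have := hcomp₂ i
    simp only [hd]
    nlinarith
  linarith [hexp, hQd, hlin]
end

section
/- Let Q be a symmetric positive semidefinite n×n real matrix, y, p ∈ ℝⁿ, and define D(α) = −(1/2) αᵀ Q α + 𝟙ᵀ α and D̃(α) = −(1/2) αᵀ Q α + (𝟙 + p)ᵀ α. Let α*, α̃ ∈ ℝⁿ satisfy yᵀα* = 0 and yᵀα̃ = 0, let α*₀ ∈ ℝ, and set ξ* = −Q α* − α*₀ y + 𝟙. Then D̃(α̃) − D(α*) ≤ pᵀ α* + (ξ* + p)ᵀ (α̃ − α*). -/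
open Matrix BigOperators

/-- The original dual objective `D(α) = −(1/2) αᵀ Q α + 𝟙ᵀ α`. -/
noncomputable def Dobj {n : ℕ} (Q : Matrix (Fin n) (Fin n) ℝ) (α : Fin n → ℝ) : ℝ :=
  -(1 / 2) * (α ⬝ᵥ (Q *ᵥ α)) + (fun _ => (1 : ℝ)) ⬝ᵥ α

/-- The perturbed dual objective `D̃(α) = −(1/2) αᵀ Q α + (𝟙 + p)ᵀ α`. -/
noncomputable def Dtobj {n : ℕ} (Q : Matrix (Fin n) (Fin n) ℝ) (p : Fin n → ℝ)
    (α : Fin n → ℝ) : ℝ :=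
  -(1 / 2) * (α ⬝ᵥ (Q *ᵥ α)) + (fun i => 1 + p i) ⬝ᵥ α

/-- With `ξ* = −Q α* − α*₀ y + 𝟙` and `yᵀα* = yᵀα̃ = 0`, one has
`D̃(α̃) − D(α*) ≤ pᵀ α* + (ξ* + p)ᵀ (α̃ − α*)`. -/
theorem perturbed_dual_gap_bound
    (n : ℕ) (hn : 0 < n)
    (Q : Matrix (Fin n) (Fin n) ℝ) (hsym : Q.IsSymm)
    (hpsd : ∀ v : Fin n → ℝ, 0 ≤ v ⬝ᵥ (Q *ᵥ v))
    (y p : Fin n → ℝ)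
    (αs αt : Fin n → ℝ) (αs₀ : ℝ)
    (heqs : y ⬝ᵥ αs = 0) (heqt : y ⬝ᵥ αt = 0)
    (ξs : Fin n → ℝ)
    (hξ : ξs = fun i => -(Q *ᵥ αs) i - αs₀ * y i + 1) :
    Dtobj Q p αt - Dobj Q αs ≤ p ⬝ᵥ αs + (fun i => ξs i + p i) ⬝ᵥ (αt - αs) := by
  subst hξ
  have hsymm : αs ⬝ᵥ (Q *ᵥ αt) = αt ⬝ᵥ (Q *ᵥ αs) := by
    rw [dotProduct_mulVec, ← Matrix.mulVec_transpose, hsym, dotProduct_comm]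
  have key := hpsd (αt - αs)
  have hexp : (αt - αs) ⬝ᵥ (Q *ᵥ (αt - αs)) =
      αt ⬝ᵥ (Q *ᵥ αt) - 2 * (αt ⬝ᵥ (Q *ᵥ αs)) + αs ⬝ᵥ (Q *ᵥ αs) := by
    rw [Matrix.mulVec_sub, dotProduct_sub, sub_dotProduct, sub_dotProduct, hsymm]
    ring
  rw [hexp] at key
  have h1 : (fun i => (1:ℝ) + p i) ⬝ᵥ αt = (fun _ => (1:ℝ)) ⬝ᵥ αt + p ⬝ᵥ αt := by
    simp only [dotProduct, ← Finset.sum_add_distrib]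
    exact Finset.sum_congr rfl fun i _ => by ring
  have h2 : (fun i => (-(Q *ᵥ αs) i - αs₀ * y i + 1) + p i) ⬝ᵥ (αt - αs)
      = -(αt ⬝ᵥ (Q *ᵥ αs)) + αs ⬝ᵥ (Q *ᵥ αs) - αs₀ * (y ⬝ᵥ αt) + αs₀ * (y ⬝ᵥ αs)
        + (fun _ => (1:ℝ)) ⬝ᵥ αt - (fun _ => (1:ℝ)) ⬝ᵥ αs + p ⬝ᵥ αt - p ⬝ᵥ αs := by
    simp only [dotProduct, Pi.sub_apply, Finset.mul_sum, ← Finset.sum_neg_distrib,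
      ← Finset.sum_add_distrib, ← Finset.sum_sub_distrib]
    exact Finset.sum_congr rfl fun i _ => by ring
  rw [heqs, heqt] at h2
  simp only [Dobj, Dtobj, h1, h2]
  linarith [key]
end

section
/- Let Q be a symmetric positive semidefinite n×n real matrix, y ∈ ℝⁿ, C ∈ ℝⁿ with C ≥ 0, p, q ∈ ℝⁿ with q ≥ 0, and let (M, O, I) be a partition of {1,…,n}. Define D(α) = −(1/2) αᵀ Q α + 𝟙ᵀ α and D̃(α) = −(1/2) αᵀ Q α + (𝟙 + p)ᵀ α. Let α*, α̃ ∈ ℝⁿ with yᵀα* = 0 and yᵀα̃ = 0; let α*₀ ∈ ℝ and set ξ* = −Q α* − α*₀ y + 𝟙. Assume: ξ*_i = 0 for i ∈ M, ξ*_i ≥ 0 for i ∈ I, ξ*_i ≤ 0 for i ∈ O; α*_i = 0 for i ∈ O, α*_i = C_i for i ∈ I, 0 ≤ α*_i ≤ C_i for i ∈ M; and −q_i ≤ α̃_i ≤ C_i + q_i for all i. Define Ĩ = {i ∈ I : ξ*_i + p_i ≥ 0}, Õ = {i ∈ O : ξ*_i + p_i ≤ 0}, and M̃ = {1,…,n}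 \ (Ĩ ∪ Õ). Then D̃(α̃) − D(α*) ≤ Σ_{i ∈ M ∪ I} |p_i| C_i + Σ_{i ∈ Ĩ ∪ Õ} |ξ*_i + p_i| q_i + Σ_{i ∈ M̃} |p_i| (C_i + q_i). -/
open Matrix BigOperators

/-- The error bound: the difference of the perturbed and original dual objective
values is bounded in terms of the perturbation vectors `p` and `q`. -/
theorem perturbed_dual_error_bound
    (n : ℕ) (hn : 0 < n)
    (Q : Matrix (Fin n) (Fin n) ℝ) (hsym : Q.IsSymm)
    (hpsd : ∀ v : Fin n → ℝ, 0 ≤ v ⬝ᵥ (Q *ᵥ v))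
    (y C p q : Fin n → ℝ)
    (hC : ∀ i, 0 ≤ C i) (hq : ∀ i, 0 ≤ q i)
    (M O I : Finset (Fin n))
    (hMO : Disjoint M O) (hMI : Disjoint M I) (hOI : Disjoint O I)
    (hcover : M ∪ O ∪ I = Finset.univ)
    (αs αt : Fin n → ℝ) (αs₀ : ℝ)
    (heqs : y ⬝ᵥ αs = 0) (heqt : y ⬝ᵥ αt = 0)
    (ξs : Fin n → ℝ)
    (hξ : ξs = fun i => -(Q *ᵥ αs) i - αs₀ * y i + 1)
    (hξM : ∀ i ∈ M, ξs i = 0)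
    (hξI : ∀ i ∈ I, 0 ≤ ξs i)
    (hξO : ∀ i ∈ O, ξs i ≤ 0)
    (hαO : ∀ i ∈ O, αs i = 0)
    (hαI : ∀ i ∈ I, αs i = C i)
    (hαM : ∀ i ∈ M, 0 ≤ αs i ∧ αs i ≤ C i)
    (hbox : ∀ i, -q i ≤ αt i ∧ αt i ≤ C i + q i)
    (It Ot Mt : Finset (Fin n))
    (hIt : It = I.filter (fun i => 0 ≤ ξs i + p i))
    (hOt : Ot = O.filter (fun i => ξs i + p i ≤ 0))
    (hMt : Mt = Finset.univ \ (It ∪ Ot)) :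
    Dtobj Q p αt - Dobj Q αs
      ≤ ∑ i ∈ M ∪ I, |p i| * C i
        + ∑ i ∈ It ∪ Ot, |ξs i + p i| * q i
        + ∑ i ∈ Mt, |p i| * (C i + q i) := by

  classical
  have symdot : ∀ a b : Fin n → ℝ, a ⬝ᵥ Q *ᵥ b = b ⬝ᵥ Q *ᵥ a := by
    intro a b
    rw [Matrix.dotProduct_mulVec, ← Matrix.mulVec_transpose, hsym.eq, dotProduct_comm]
  have hξt : ∀ v : Fin n → ℝ, ξs ⬝ᵥ v
      = -(αs ⬝ᵥ Q *ᵥ v) - αs₀ * (y ⬝ᵥ v) + (fun _ => (1:ℝ)) ⬝ᵥ v := by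
    intro v
    calc ξs ⬝ᵥ v = ∑ i, (-(v i * (Q *ᵥ αs) i) - αs₀ * (y i * v i) + v i) := by
          rw [hξ]; exact Finset.sum_congr rfl fun i _ => by ring
      _ = -(v ⬝ᵥ Q *ᵥ αs) - αs₀ * (y ⬝ᵥ v) + (fun _ => (1:ℝ)) ⬝ᵥ v := by
          rw [Finset.sum_add_distrib, Finset.sum_sub_distrib]
          simp [dotProduct, Finset.mul_sum]
      _ = -(αs ⬝ᵥ Q *ᵥ v) - αs₀ * (y ⬝ᵥ v) + (fun _ => (1:ℝ)) ⬝ᵥ v := by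
          rw [symdot αs v]
  have hquad : (αt - αs) ⬝ᵥ Q *ᵥ (αt - αs)
      = αt ⬝ᵥ Q *ᵥ αt - 2 * (αs ⬝ᵥ Q *ᵥ αt) + αs ⬝ᵥ Q *ᵥ αs := by
    rw [Matrix.mulVec_sub, dotProduct_sub, sub_dotProduct, sub_dotProduct,
      symdot αt αs]
    ring
  have hSsum : ∑ i, ((ξs i + p i) * αt i - ξs i * αs i)
      = ξs ⬝ᵥ αt + p ⬝ᵥ αt - ξs ⬝ᵥ αs := by
    simp [dotProduct, add_mul, Finset.sum_add_distrib, Finset.sum_sub_distrib]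
  have hone : (fun i => (1:ℝ) + p i) ⬝ᵥ αt = (fun _ => (1:ℝ)) ⬝ᵥ αt + p ⬝ᵥ αt := by
    simp [dotProduct, add_mul, Finset.sum_add_distrib]
  have key : Dtobj Q p αt - Dobj Q αs ≤ ∑ i, ((ξs i + p i) * αt i - ξs i * αs i) := by
    have h0 := hpsd (αt - αs)
    have e1 := hξt αt
    have e2 := hξt αs
    rw [heqt, mul_zero] at e1
    rw [heqs, mul_zero] at e2
    rw [hSsum, e1, e2]
    simp only [Dobj, Dtobj]
    rw [hone]
    nlinarith [hquad]
  refine le_trans key ?_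
  have e1 : ∑ i ∈ M ∪ I, |p i| * C i = ∑ i, if i ∈ M ∪ I then |p i| * C i else 0 := by
    rw [Finset.sum_ite_mem, Finset.univ_inter]
  have e2 : ∑ i ∈ It ∪ Ot, |ξs i + p i| * q i
      = ∑ i, if i ∈ It ∪ Ot then |ξs i + p i| * q i else 0 := by
    rw [Finset.sum_ite_mem, Finset.univ_inter]
  have e3 : ∑ i ∈ Mt, |p i| * (C i + q i)
      = ∑ i, if i ∈ Mt then |p i| * (C i + q i) else 0 := by
    rw [Finset.sum_ite_mem, Finset.univ_inter]
  rw [e1, e2, e3, ← Finset.sum_add_distrib, ← Finset.sum_add_distrib]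
  apply Finset.sum_le_sum
  intro i _
  by_cases h1 : i ∈ It
  · have hiI : i ∈ I := by rw [hIt] at h1; exact (Finset.mem_filter.mp h1).1
    have hξp : 0 ≤ ξs i + p i := by rw [hIt] at h1; exact (Finset.mem_filter.mp h1).2
    have hMt' : i ∉ Mt := by simp [hMt, h1]
    rw [if_pos (Finset.mem_union_right _ hiI), if_pos (Finset.mem_union_left _ h1),
      if_neg hMt', hαI i hiI, abs_of_nonneg hξp]
    nlinarith [mul_le_mul_of_nonneg_left (hbox i).2 hξp,
      mul_le_mul_of_nonneg_right (le_abs_self (p i)) (hC i), hq i, hξI i hiI]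
  · by_cases h2 : i ∈ Ot
    · have hiO : i ∈ O := by rw [hOt] at h2; exact (Finset.mem_filter.mp h2).1
      have hξp : ξs i + p i ≤ 0 := by rw [hOt] at h2; exact (Finset.mem_filter.mp h2).2
      have hnMI : i ∉ M ∪ I := by
        rw [Finset.mem_union]
        rintro (h | h)
        · exact Finset.disjoint_left.mp hMO h hiO
        · exact Finset.disjoint_left.mp hOI hiO h
      have hMt' : i ∉ Mt := by simp [hMt, h2]
      rw [if_neg hnMI, if_pos (Finset.mem_union_right _ h2), if_neg hMt',
        hαO i hiO, abs_of_nonpos hξp]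
      nlinarith [mul_le_mul_of_nonpos_left (hbox i).1 hξp]
    · have hMt' : i ∈ Mt := by simp [hMt, h1, h2]
      have hnIO : i ∉ It ∪ Ot := by simp [h1, h2]
      have hicov : i ∈ M ∪ O ∪ I := hcover ▸ Finset.mem_univ i
      rw [Finset.mem_union, Finset.mem_union] at hicov
      rw [if_neg hnIO, if_pos hMt']
      rcases hicov with (hM | hO) | hI
      · have habs : |αt i| ≤ C i + q i :=
          abs_le.mpr ⟨by linarith [(hbox i).1, hC i, hq i], (hbox i).2⟩
        have h3 : p i * αt i ≤ |p i| * (C i + q i) := by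
          refine le_trans (le_abs_self _) ?_
          rw [abs_mul]
          exact mul_le_mul_of_nonneg_left habs (abs_nonneg _)
        rw [if_pos (Finset.mem_union_left _ hM), hξM i hM]
        nlinarith [mul_nonneg (abs_nonneg (p i)) (hC i), h3]
      · have hpos : 0 < ξs i + p i := by
          by_contra hc
          exact h2 (by rw [hOt]; exact Finset.mem_filter.mpr ⟨hO, not_lt.mp hc⟩)
        have hnMI : i ∉ M ∪ I := by
          rw [Finset.mem_union]
          rintro (h | h)
          · exact Finset.disjoint_left.mp hMO h hO
          · exact Finset.disjoint_left.mp hOI hO h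
        have h3 : (ξs i + p i) * αt i ≤ (ξs i + p i) * (C i + q i) :=
          mul_le_mul_of_nonneg_left (hbox i).2 hpos.le
        have h4 : ξs i + p i ≤ |p i| := by linarith [hξO i hO, le_abs_self (p i)]
        have h5 : (ξs i + p i) * (C i + q i) ≤ |p i| * (C i + q i) :=
          mul_le_mul_of_nonneg_right h4 (by linarith [hC i, hq i])
        rw [if_neg hnMI, hαO i hO]
        nlinarith [h3, h5]
      · have hneg : ξs i + p i < 0 := by
          by_contra hc
          exact h1 (by rw [hIt]; exact Finset.mem_filter.mpr ⟨hI, not_lt.mp hc⟩)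
        have h3 : (ξs i + p i) * αt i ≤ (ξs i + p i) * (-q i) :=
          mul_le_mul_of_nonpos_left (hbox i).1 hneg.le
        have h4 : -(ξs i + p i) ≤ |p i| := by linarith [hξI i hI, neg_abs_le (p i)]
        have h5 : -(ξs i + p i) * q i ≤ |p i| * q i :=
          mul_le_mul_of_nonneg_right h4 (hq i)
        rw [if_pos (Finset.mem_union_right _ hI), hαI i hI]
        nlinarith [h3, h5, mul_nonneg (hξI i hI) (hC i),
          mul_nonneg (abs_nonneg (p i)) (hC i)]
end

section
/- Let M, O, I, B be pairwise disjoint subsets of {1,…,n} whose union is {1,…,n}, let d ∈ ℝⁿ, and assume the bordered matrix M̄ = [[0, y_Mᵀ],[y_M, Q_{M,M}]] is invertible. Define Q' = Q_{B,B} − [y_B Q_{B,M}] M̄⁻¹ [y_Bᵀ; Q_{M,B}] and u = −M̄⁻¹ [y_Iᵀ; Q_{M,I}] d_I, and let v_B = [y_B Q_{B,M}] u + Q_{B,I} d_I. Given any β_B ∈ ℝ^{|B|}, define β ∈ ℝⁿ and β₀ ∈ ℝ by: β_i = 0 for i ∈ O, β_i = d_i for i ∈ I, β restricted to B equals β_B,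 and [β₀; β_M] = −M̄⁻¹ [y_Bᵀ; Q_{M,B}] β_B + u. Then g := Q β + β₀ y satisfies g_i = 0 for all i ∈ M, yᵀ β = 0, and g restricted to B equals Q' β_B + v_B. -/
open Matrix BigOperators

/-- The horizontal block `[y_B  Q_{B,M}]`. -/
noncomputable def sideB {n : ℕ} (Q : Matrix (Fin n) (Fin n) ℝ) (y : Fin n → ℝ)
    (M B : Finset (Fin n)) : Matrix ↥B (Unit ⊕ ↥M) ℝ :=
  Matrix.of fun b => Sum.elim (fun _ => y b.1) (fun m : ↥M => Q b.1 m.1)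

/-- The vertical block `[y_Bᵀ; Q_{M,B}]`. -/
noncomputable def colB {n : ℕ} (Q : Matrix (Fin n) (Fin n) ℝ) (y : Fin n → ℝ)
    (M B : Finset (Fin n)) : Matrix (Unit ⊕ ↥M) ↥B ℝ :=
  Matrix.of fun s (b : ↥B) => Sum.elim (fun _ => y b.1) (fun m : ↥M => Q m.1 b.1) s

/-- The reduced matrix `Q' = Q_{B,B} − [y_B Q_{B,M}] M̄⁻¹ [y_Bᵀ; Q_{M,B}]`. -/
noncomputable def Qred {n : ℕ} (Q : Matrix (Fin n) (Fin n) ℝ) (y : Fin n → ℝ)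
    (M B : Finset (Fin n)) : Matrix ↥B ↥B ℝ :=
  Q.submatrix (fun b : ↥B => b.1) (fun b : ↥B => b.1)
    - sideB Q y M B * (bordered Q y M)⁻¹ * colB Q y M B

/-- `u = −M̄⁻¹ [y_Iᵀ; Q_{M,I}] d_I`. -/
noncomputable def uVec {n : ℕ} (Q : Matrix (Fin n) (Fin n) ℝ) (y : Fin n → ℝ)
    (M I : Finset (Fin n)) (d : Fin n → ℝ) : (Unit ⊕ ↥M) → ℝ :=
  -((bordered Q y M)⁻¹ *ᵥ rhsIVec Q y M I d)

/-- `v_B = [y_B Q_{B,M}] u + Q_{B,I} d_I`. -/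
noncomputable def vB {n : ℕ} (Q : Matrix (Fin n) (Fin n) ℝ) (y : Fin n → ℝ)
    (M I B : Finset (Fin n)) (d : Fin n → ℝ) : ↥B → ℝ :=
  fun b => (sideB Q y M B *ᵥ uVec Q y M I d) b + ∑ i ∈ I, Q b.1 i * d i

/-- Reformulation of the optimization problem (10): if `β` is determined from `β_B` by
the partition and the bordered linear system, then the gradient `g = Q β + β₀ y`
vanishes on `M`, satisfies `yᵀβ = 0`, and restricted to `B` equals `Q' β_B + v_B`. -/
theorem reduced_qp_gradient
    (n : ℕ) (hn : 0 < n)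
    (Q : Matrix (Fin n) (Fin n) ℝ) (hQ : Q.IsSymm)
    (y d : Fin n → ℝ)
    (M O I B : Finset (Fin n))
    (h1 : Disjoint M O) (h2 : Disjoint M I) (h3 : Disjoint M B)
    (h4 : Disjoint O I) (h5 : Disjoint O B) (h6 : Disjoint I B)
    (hcover : M ∪ O ∪ I ∪ B = Finset.univ)
    (hInv : IsUnit (bordered Q y M))
    (βB : ↥B → ℝ) (β : Fin n → ℝ) (β₀ : ℝ)
    (hβO : ∀ i ∈ O, β i = 0)
    (hβI : ∀ i ∈ I, β i = d i)
    (hβB : ∀ b : ↥B, β b.1 = βB b)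
    (hβM : Sum.elim (fun _ : Unit => β₀) (fun m : ↥M => β m.1)
        = -((bordered Q y M)⁻¹ *ᵥ (colB Q y M B *ᵥ βB)) + uVec Q y M I d)
    (g : Fin n → ℝ) (hg : g = Q *ᵥ β + β₀ • y) :
    (∀ i ∈ M, g i = 0) ∧
    y ⬝ᵥ β = 0 ∧
    (∀ b : ↥B, g b.1 = (Qred Q y M B *ᵥ βB) b + vB Q y M I B d b) := by
  have h4' : Disjoint (M ∪ O) I := Finset.disjoint_union_left.mpr ⟨h2, h4⟩
  have h6' : Disjoint (M ∪ O ∪ I) B :=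
    Finset.disjoint_union_left.mpr ⟨Finset.disjoint_union_left.mpr ⟨h3, h5⟩, h6⟩
  have hdet : IsUnit (bordered Q y M).det :=
    (Matrix.isUnit_iff_isUnit_det _).mp hInv
  have hx : bordered Q y M *ᵥ (Sum.elim (fun _ : Unit => β₀) (fun m : ↥M => β m.1))
      = -(colB Q y M B *ᵥ βB) - rhsIVec Q y M I d := by
    rw [hβM, uVec]
    simp only [Matrix.mulVec_add, Matrix.mulVec_neg, Matrix.mulVec_mulVec, ← Matrix.mul_assoc,
      Matrix.mul_nonsing_inv _ hdet, Matrix.one_mul, Matrix.one_mulVec]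
    rw [sub_eq_add_neg]
  -- splitting sums over the partition
  have hsplit : ∀ f : Fin n → ℝ, ∑ i, f i =
      (∑ i ∈ M, f i) + (∑ i ∈ O, f i) + (∑ i ∈ I, f i) + (∑ i ∈ B, f i) := by
    intro f
    rw [← hcover, Finset.sum_union h6', Finset.sum_union h4', Finset.sum_union h1]
  -- row equations of the bordered system
  have hrow0 : (∑ m : ↥M, y m.1 * β m.1)
      = -(∑ b : ↥B, y b.1 * βB b) - ∑ i ∈ I, y i * d i := by
    have := congrFun hx (Sum.inl ())
    simpa [bordered, colB, rhsIVec, Matrix.mulVec, dotProduct,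
      Fintype.sum_sum_type] using this
  have hrowM : ∀ m : ↥M, y m.1 * β₀ + ∑ m' : ↥M, Q m.1 m'.1 * β m'.1
      = -(∑ b : ↥B, Q m.1 b.1 * βB b) - ∑ i ∈ I, Q m.1 i * d i := by
    intro m
    have := congrFun hx (Sum.inr m)
    simpa [bordered, colB, rhsIVec, Matrix.mulVec, dotProduct,
      Fintype.sum_sum_type] using this
  -- helper: rewrite sums over the parts
  have hsumO : ∀ f : Fin n → ℝ, ∑ i ∈ O, f i * β i = 0 := by
    intro f
    refine Finset.sum_eq_zero fun i hi => by rw [hβO i hi, mul_zero]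
  have hsumI : ∀ f : Fin n → ℝ, ∑ i ∈ I, f i * β i = ∑ i ∈ I, f i * d i := by
    intro f
    exact Finset.sum_congr rfl fun i hi => by rw [hβI i hi]
  have hsumB : ∀ f : Fin n → ℝ, ∑ i ∈ B, f i * β i = ∑ b : ↥B, f b.1 * βB b := by
    intro f
    rw [← Finset.sum_coe_sort B (fun i => f i * β i)]
    exact Finset.sum_congr rfl fun b _ => by rw [hβB b]
  have hsumM : ∀ f : Fin n → ℝ, ∑ i ∈ M, f i * β i = ∑ m : ↥M, f m.1 * β m.1 := by
    intro f
    rw [← Finset.sum_coe_sort M (fun i => f i * β i)]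
  refine ⟨?_, ?_, ?_⟩
  · intro i hi
    have hr := hrowM ⟨i, hi⟩
    rw [hg]
    simp only [Pi.add_apply, Pi.smul_apply, smul_eq_mul, Matrix.mulVec, dotProduct]
    rw [hsplit (fun j => Q i j * β j), hsumO, hsumI, hsumB, hsumM]
    simp only at hr
    linarith [hr]
  · simp only [dotProduct]
    rw [hsplit (fun j => y j * β j), hsumO, hsumI, hsumB, hsumM]
    linarith [hrow0]
  · intro b
    have hsx : (sideB Q y M B *ᵥ (Sum.elim (fun _ : Unit => β₀) (fun m : ↥M => β m.1))) b
        = y b.1 * β₀ + ∑ m : ↥M, Q b.1 m.1 * β m.1 := by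
      simp [sideB, Matrix.mulVec, dotProduct, Fintype.sum_sum_type]
    have hrhs : (Qred Q y M B *ᵥ βB) b + vB Q y M I B d b
        = (∑ b' : ↥B, Q b.1 b'.1 * βB b')
          + (sideB Q y M B *ᵥ (Sum.elim (fun _ : Unit => β₀) (fun m : ↥M => β m.1))) b
          + ∑ i ∈ I, Q b.1 i * d i := by
      rw [Qred, Matrix.sub_mulVec, vB, hβM, Matrix.mulVec_add, Matrix.mulVec_neg]
      simp only [Pi.sub_apply, Pi.add_apply, Pi.neg_apply, ← Matrix.mulVec_mulVec]
      have : (Q.submatrix (fun b : ↥B => b.1) (fun b : ↥B => b.1) *ᵥ βB) b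
          = ∑ b' : ↥B, Q b.1 b'.1 * βB b' := by
        simp [Matrix.mulVec, dotProduct]
      rw [this]
      ring
    rw [hrhs, hsx, hg]
    simp only [Pi.add_apply, Pi.smul_apply, smul_eq_mul, Matrix.mulVec, dotProduct]
    rw [hsplit (fun j => Q b.1 j * β j), hsumO, hsumI, hsumB, hsumM]
    ring
end
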